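/- For a monoid S, every indecomposable right S-act is InC-injective if and only if either every right S-act is InC-injective or every indecomposable right S-act is injective. -/
import Mathlib


universe u

/-- A right `S`-act structure on a nonempty type `A`: a right action of the monoid `S`. -/
class RightAct (S : Type u) [Monoid S] (A : Type u) : Type u where
  act : A → S → A
  act_one : ∀ a : A, act a 1 = a
  act_mul : ∀ (a : A) (s t : S), act (act a s) t = act a (s * t)
  nonempty : Nonempty A

infixl:70 " ⊛ " => RightAct.act

/-- `S` is left reversible: every two right ideals (equiv. principal ones) intersect. -/
def LeftReversible (S : Type u) [Monoid S] : Prop :=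
  ∀ a b : S, ∃ u v : S, a * u = b * v

/-- A left zero element of the monoid `S`. -/
def IsLeftZero (S : Type u) [Monoid S] (z : S) : Prop :=
  ∀ s : S, z * s = z

/-- `f : A → B` is a homomorphism of right `S`-acts. -/
def IsActHom (S : Type u) [Monoid S] {A B : Type u} [RightAct S A] [RightAct S B]
    (f : A → B) : Prop :=
  ∀ (a : A) (s : S), f (a ⊛ s) = f a ⊛ s

/-- The restriction of `f : A → B` to the subset `C` is a homomorphism of right `S`-acts. -/
def IsActHomOn (S : Type u) [Monoid S] {A B : Type u} [RightAct S A] [RightAct S B]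
    (f : A → B) (C : Set A) : Prop :=
  ∀ a ∈ C, ∀ s : S, f (a ⊛ s) = f a ⊛ s

/-- A subact: a nonempty subset closed under the action. -/
def IsSubact (S : Type u) [Monoid S] {A : Type u} [RightAct S A] (C : Set A) : Prop :=
  C.Nonempty ∧ ∀ a ∈ C, ∀ s : S, a ⊛ s ∈ C

/-- A zero element of an act: fixed by the action of every `s ∈ S`. -/
def IsZeroElem (S : Type u) [Monoid S] {A : Type u} [RightAct S A] (θ : A) : Prop :=
  ∀ s : S, θ ⊛ s = θ

/-- A subset `D` (viewed as an act) is decomposable: it is the disjoint union of two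
nonempty subacts. -/
def DecomposableSet (S : Type u) [Monoid S] {A : Type u} [RightAct S A] (D : Set A) : Prop :=
  ∃ B C : Set A, IsSubact S B ∧ IsSubact S C ∧ B ∪ C = D ∧ B ∩ C = ∅

/-- A subset (viewed as an act) is indecomposable. -/
def IndecomposableSet (S : Type u) [Monoid S] {A : Type u} [RightAct S A] (D : Set A) : Prop :=
  ¬ DecomposableSet S D

/-- The act `A` is decomposable. -/
def Decomposable (S : Type u) [Monoid S] (A : Type u) [RightAct S A] : Prop :=
  DecomposableSet S (Set.univ : Set A)

/-- The act `A` is indecomposable. -/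
def Indecomposable (S : Type u) [Monoid S] (A : Type u) [RightAct S A] : Prop :=
  ¬ Decomposable S A

/-- A cyclic act: generated by a single element. -/
def CyclicAct (S : Type u) [Monoid S] (A : Type u) [RightAct S A] : Prop :=
  ∃ a : A, ∀ x : A, ∃ s : S, x = a ⊛ s

/-- `A` is a retract of `B`. -/
def IsRetractOf (S : Type u) [Monoid S] (A B : Type u) [RightAct S A] [RightAct S B] : Prop :=
  ∃ (i : A → B) (p : B → A), IsActHom S i ∧ IsActHom S p ∧ ∀ a : A, p (i a) = a

/-- `Q` is an injective act: every homomorphism from a subact `C` of any act `B` into `Q`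
extends to `B`. -/
def ActInjective (S : Type u) [Monoid S] (Q : Type u) [RightAct S Q] : Prop :=
  ∀ (B : Type u) [RightAct S B], ∀ C : Set B, IsSubact S C →
    ∀ f : B → Q, IsActHomOn S f C →
      ∃ g : B → Q, IsActHom S g ∧ Set.EqOn g f C

/-- `Q` is InC-injective: injective relative to all embeddings into indecomposable acts. -/
def InCInjective (S : Type u) [Monoid S] (Q : Type u) [RightAct S Q] : Prop :=
  ∀ (B : Type u) [RightAct S B], Indecomposable S B → ∀ C : Set B, IsSubact S C →
    ∀ f : B → Q, IsActHomOn S f C →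
      ∃ g : B → Q, IsActHom S g ∧ Set.EqOn g f C

/-- `Q` is InD-injective: injective relative to all embeddings of indecomposable acts. -/
def InDInjective (S : Type u) [Monoid S] (Q : Type u) [RightAct S Q] : Prop :=
  ∀ (B : Type u) [RightAct S B], ∀ C : Set B, IsSubact S C → IndecomposableSet S C →
    ∀ f : B → Q, IsActHomOn S f C →
      ∃ g : B → Q, IsActHom S g ∧ Set.EqOn g f C

/-- `Q` is PInD-injective: every monomorphism from an indecomposable subact extends. -/
def PInDInjective (S : Type u) [Monoid S] (Q : Type u) [RightAct S Q] : Prop :=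
  ∀ (B : Type u) [RightAct S B], ∀ C : Set B, IsSubact S C → IndecomposableSet S C →
    ∀ f : B → Q, IsActHomOn S f C → Set.InjOn f C →
      ∃ g : B → Q, IsActHom S g ∧ Set.EqOn g f C

/-- `A` is quasi injective: homomorphisms from subacts of `A` to `A` extend to `A`. -/
def QuasiInjective (S : Type u) [Monoid S] (A : Type u) [RightAct S A] : Prop :=
  ∀ C : Set A, IsSubact S C → ∀ f : A → A, IsActHomOn S f C →
    ∃ g : A → A, IsActHom S g ∧ Set.EqOn g f C

/-- `A` is pseudo injective: monomorphisms from subacts of any act into `A` extend. -/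
def PseudoInjective (S : Type u) [Monoid S] (A : Type u) [RightAct S A] : Prop :=
  ∀ (C : Type u) [RightAct S C], ∀ B : Set C, IsSubact S B →
    ∀ f : C → A, IsActHomOn S f B → Set.InjOn f B →
      ∃ g : C → A, IsActHom S g ∧ Set.EqOn g f B

/-- A subact `Q` of `A` (viewed as an act in its own right) is injective. -/
def ActInjectiveSet (S : Type u) [Monoid S] {A : Type u} [RightAct S A] (Q : Set A) : Prop :=
  ∀ (B : Type u) [RightAct S B], ∀ C : Set B, IsSubact S C →
    ∀ f : B → A, IsActHomOn S f C → (∀ c ∈ C, f c ∈ Q) →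
      ∃ g : B → A, IsActHom S g ∧ (∀ b : B, g b ∈ Q) ∧ Set.EqOn g f C

/-- A subact `Q` of `A` (viewed as an act in its own right) is InD-injective. -/
def InDInjectiveSet (S : Type u) [Monoid S] {A : Type u} [RightAct S A] (Q : Set A) : Prop :=
  ∀ (B : Type u) [RightAct S B], ∀ C : Set B, IsSubact S C → IndecomposableSet S C →
    ∀ f : B → A, IsActHomOn S f C → (∀ c ∈ C, f c ∈ Q) →
      ∃ g : B → A, IsActHom S g ∧ (∀ b : B, g b ∈ Q) ∧ Set.EqOn g f C

/-- A subact `Q` of `A` (viewed as an act in its own right) is PInD-injective. -/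
def PInDInjectiveSet (S : Type u) [Monoid S] {A : Type u} [RightAct S A] (Q : Set A) : Prop :=
  ∀ (B : Type u) [RightAct S B], ∀ C : Set B, IsSubact S C → IndecomposableSet S C →
    ∀ f : B → A, IsActHomOn S f C → Set.InjOn f C → (∀ c ∈ C, f c ∈ Q) →
      ∃ g : B → A, IsActHom S g ∧ (∀ b : B, g b ∈ Q) ∧ Set.EqOn g f C

/-- The monoid `S` as a right act over itself, by multiplication. -/
instance selfAct (S : Type u) [Monoid S] : RightAct S S where
  act a s := a * s
  act_one := mul_one
  act_mul a s t := mul_assoc a s t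
  nonempty := ⟨1⟩

/-- `Q` is weakly injective: homomorphisms from right ideals of `S` into `Q` extend to `S`. -/
def WeaklyInjective (S : Type u) [Monoid S] (Q : Type u) [RightAct S Q] : Prop :=
  ∀ I : Set S, IsSubact S I → ∀ f : S → Q, IsActHomOn S f I →
    ∃ g : S → Q, IsActHom S g ∧ Set.EqOn g f I

/-- The relation whose equivalence closure has the indecomposable components as classes. -/
def ActRel (S : Type u) [Monoid S] {A : Type u} [RightAct S A] (a b : A) : Prop :=
  ∃ s : S, b = a ⊛ s

/-- The indecomposable component of the element `a` of an act. -/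
def ActComponent (S : Type u) [Monoid S] {A : Type u} [RightAct S A] (a : A) : Set A :=
  {b | Relation.EqvGen (ActRel S) a b}


section Aux

variable {S : Type u} [Monoid S]

/-- The subtype act on a subact. -/
def subactInst {A : Type u} [RightAct S A] {C : Set A} (h : IsSubact S C) :
    RightAct S ↥C where
  act x s := ⟨x.val ⊛ s, h.2 x.val x.2 s⟩
  act_one x := Subtype.ext (RightAct.act_one x.val)
  act_mul x s t := Subtype.ext (RightAct.act_mul x.val s t)
  nonempty := h.1.to_subtype

lemma eqvGen_part {A : Type u} [RightAct S A] {B1 B2 : Set A}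
    (h1 : IsSubact S B1) (h2 : IsSubact S B2) (hu : B1 ∪ B2 = Set.univ)
    (hd : B1 ∩ B2 = ∅) {a b : A} (h : Relation.EqvGen (ActRel S) a b) :
    a ∈ B1 ↔ b ∈ B1 := by
  have hmem : ∀ x : A, x ∉ B1 → x ∈ B2 := by
    intro x hx
    have : x ∈ B1 ∪ B2 := by rw [hu]; trivial
    exact this.resolve_left hx
  have hdis : ∀ x : A, x ∈ B1 → x ∈ B2 → False := by
    intro x hx hx2
    have : x ∈ B1 ∩ B2 := ⟨hx, hx2⟩
    rw [hd] at this; exact this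
  induction h with
  | rel x y hxy =>
    obtain ⟨s, rfl⟩ := hxy
    constructor
    · intro hx; exact h1.2 x hx s
    · intro hy
      by_contra hx
      exact hdis _ hy (h2.2 x (hmem x hx) s)
  | refl x => rfl
  | symm x y _ ih => exact ih.symm
  | trans x y z _ _ ih1 ih2 => exact ih1.trans ih2

/-- An act is indecomposable iff it is connected. -/
lemma indec_iff_conn {A : Type u} [RightAct S A] :
    Indecomposable S A ↔ ∀ a b : A, Relation.EqvGen (ActRel S) a b := by
  constructor
  · intro hA a b
    by_contra hab
    apply hA
    refine ⟨ActComponent S a, {x | ¬ Relation.EqvGen (ActRel S) a x}, ?_, ?_, ?_, ?_⟩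
    · exact ⟨⟨a, Relation.EqvGen.refl a⟩, fun x hx s =>
        hx.trans _ _ _ (Relation.EqvGen.rel _ _ ⟨s, rfl⟩)⟩
    · refine ⟨⟨b, hab⟩, fun x hx s hxs => hx ?_⟩
      exact hxs.trans _ _ _ (Relation.EqvGen.symm _ _ (Relation.EqvGen.rel _ _ ⟨s, rfl⟩))
    · exact Set.eq_univ_of_forall fun x => Classical.em _
    · exact Set.eq_empty_iff_forall_notMem.mpr fun x hx => hx.2 hx.1
  · intro hconn hdec
    obtain ⟨B1, B2, h1, h2, hu, hd⟩ := hdec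
    obtain ⟨x, hx⟩ := h1.1
    obtain ⟨y, hy⟩ := h2.1
    have hy1 : y ∈ B1 := (eqvGen_part h1 h2 hu hd (hconn x y)).mp hx
    have : y ∈ B1 ∩ B2 := ⟨hy1, hy⟩
    rw [hd] at this; exact this

lemma comp_subact {A : Type u} [RightAct S A] (a : A) :
    IsSubact S (ActComponent S a) :=
  ⟨⟨a, Relation.EqvGen.refl a⟩, fun x hx s =>
    hx.trans _ _ _ (Relation.EqvGen.rel _ _ ⟨s, rfl⟩)⟩

lemma comp_closed {A : Type u} [RightAct S A] {a x : A} (hx : x ∈ ActComponent S a)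
    (s : S) : x ⊛ s ∈ ActComponent S a :=
  (comp_subact a).2 x hx s

lemma eqvGen_lift {A : Type u} [RightAct S A] (a : A) :
    letI := subactInst (comp_subact (S := S) a)
    ∀ {p q : A}, Relation.EqvGen (ActRel S) p q →
      ∀ (hp : p ∈ ActComponent S a) (hq : q ∈ ActComponent S a),
      Relation.EqvGen (ActRel S) (⟨p, hp⟩ : ↥(ActComponent S a)) ⟨q, hq⟩ := by
  letI := subactInst (comp_subact (S := S) a)
  intro p q h
  induction h with
  | rel x y hxy =>
    intro hp hq
    obtain ⟨s, rfl⟩ := hxy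
    exact Relation.EqvGen.rel _ _ ⟨s, rfl⟩
  | refl x => intro hp hq; exact Relation.EqvGen.refl _
  | symm x y h ih => intro hp hq; exact Relation.EqvGen.symm _ _ (ih hq hp)
  | trans x y z hxy hyz ih1 ih2 =>
    intro hp hq
    have hy : y ∈ ActComponent S a := hp.trans _ _ _ hxy
    exact Relation.EqvGen.trans _ _ _ (ih1 hp hy) (ih2 hy hq)

/-- Components are indecomposable. -/
lemma comp_indec {A : Type u} [RightAct S A] (a : A) :
    letI := subactInst (comp_subact (S := S) a)
    Indecomposable S ↥(ActComponent S a) := by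
  letI := subactInst (comp_subact (S := S) a)
  rw [indec_iff_conn]
  intro x y
  have h1 := eqvGen_lift (S := S) a (x.2) (Relation.EqvGen.refl a) x.2
  have h2 := eqvGen_lift (S := S) a (y.2) (Relation.EqvGen.refl a) y.2
  exact Relation.EqvGen.trans _ _ _ (Relation.EqvGen.symm _ _ h1) h2

/-- In an indecomposable act over a left reversible monoid, any two elements
have a common multiple. -/
lemma lr_common {A : Type u} [RightAct S A] (hS : LeftReversible S)
    (hA : Indecomposable S A) (a b : A) : ∃ s t : S, a ⊛ s = b ⊛ t := by
  have h := (indec_iff_conn.mp hA) a b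
  induction h with
  | rel x y hxy => obtain ⟨s, rfl⟩ := hxy; exact ⟨s, 1, by rw [RightAct.act_one]⟩
  | refl x => exact ⟨1, 1, rfl⟩
  | symm x y _ ih => obtain ⟨s, t, hst⟩ := ih; exact ⟨t, s, hst.symm⟩
  | trans x y z _ _ ih1 ih2 =>
    obtain ⟨s, t, hst⟩ := ih1
    obtain ⟨u, v, huv⟩ := ih2
    obtain ⟨p, q, hpq⟩ := hS t u
    refine ⟨s * p, v * q, ?_⟩
    rw [← RightAct.act_mul, ← RightAct.act_mul, hst, ← huv, RightAct.act_mul,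
      RightAct.act_mul, hpq]

/-- Case A: if `S` is left reversible and all indecomposable acts are
InC-injective, then every act is InC-injective. -/
lemma caseA (hS : LeftReversible S)
    (H : ∀ (A : Type u) [RightAct S A], Indecomposable S A → InCInjective S A)
    (Q : Type u) [RightAct S Q] : InCInjective S Q := by
  classical
  intro B _ hB C hC f hf
  obtain ⟨c₀, hc₀⟩ := hC.1
  set D : Set Q := ActComponent S (f c₀) with hD
  letI instD := subactInst (comp_subact (S := S) (f c₀))
  have hmem : ∀ c ∈ C, f c ∈ D := by
    intro c hc
    obtain ⟨s, t, hst⟩ := lr_common hS hB c₀ c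
    have : f c₀ ⊛ s = f c ⊛ t := by
      rw [← hf c₀ hc₀ s, ← hf c hc t, hst]
    refine Relation.EqvGen.trans _ (f c₀ ⊛ s) _ (Relation.EqvGen.rel _ _ ⟨s, rfl⟩) ?_
    rw [this]
    exact Relation.EqvGen.symm _ _ (Relation.EqvGen.rel _ _ ⟨t, rfl⟩)
  have hDindec : Indecomposable S ↥D := comp_indec (S := S) (f c₀)
  have hDinj : InCInjective S ↥D := H ↥D hDindec
  set f' : B → ↥D := fun x => if h : x ∈ C then ⟨f x, hmem x h⟩
    else ⟨f c₀, Relation.EqvGen.refl _⟩ with hf'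
  have hf'hom : IsActHomOn S f' C := by
    intro c hc s
    have h1 : c ⊛ s ∈ C := hC.2 c hc s
    simp only [hf', dif_pos h1, dif_pos hc]
    exact Subtype.ext (hf c hc s)
  obtain ⟨g', hg'hom, hg'eq⟩ := hDinj B hB C hC f' hf'hom
  refine ⟨fun x => (g' x).val, fun x s => ?_, fun c hc => ?_⟩
  · show (g' (x ⊛ s)).val = (g' x).val ⊛ s
    rw [hg'hom x s]; rfl
  · show (g' c).val = f c
    rw [hg'eq hc]; simp only [hf', dif_pos hc]

/-- The Rees congruence collapsing the right ideal `bS`. -/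
def reesSetoid (b : S) : Setoid S where
  r x y := x = y ∨ ((∃ u, x = b * u) ∧ (∃ v, y = b * v))
  iseqv := by
    refine ⟨fun x => Or.inl rfl, ?_, ?_⟩
    · rintro x y (rfl | ⟨hx, hy⟩)
      · exact Or.inl rfl
      · exact Or.inr ⟨hy, hx⟩
    · rintro x y z (rfl | ⟨hx, hy⟩) (rfl | ⟨hy', hz⟩)
      · exact Or.inl rfl
      · exact Or.inr ⟨hy', hz⟩
      · exact Or.inr ⟨hx, hy⟩
      · exact Or.inr ⟨hx, hz⟩

/-- The Rees quotient act `S/bS`. -/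
def reesAct (b : S) : RightAct S (Quotient (reesSetoid b)) where
  act q s := Quotient.map (fun x => x * s)
    (by
      rintro x y (rfl | ⟨⟨u, rfl⟩, ⟨v, rfl⟩⟩)
      · exact Or.inl rfl
      · exact Or.inr ⟨⟨u * s, mul_assoc b u s⟩, ⟨v * s, mul_assoc b v s⟩⟩) q
  act_one q := by
    induction q using Quotient.ind
    simp [Quotient.map_mk]
  act_mul q s t := by
    induction q using Quotient.ind
    simp [Quotient.map_mk, mul_assoc]
  nonempty := ⟨Quotient.mk _ 1⟩

/-- Under failure of left reversibility, every InC-injective indecomposable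
act has a zero element. -/
lemma exists_zero {a b : S} (hab : ∀ u v : S, a * u ≠ b * v)
    (Q : Type u) [RightAct S Q] (hQinj : InCInjective S Q) :
    ∃ θ : Q, IsZeroElem S θ := by
  classical
  letI instT := reesAct b
  have hact : ∀ x s : S,
      (Quotient.mk (reesSetoid b) x : Quotient (reesSetoid b)) ⊛ s
        = Quotient.mk (reesSetoid b) (x * s) := by
    intro x s
    show Quotient.map (fun y => y * s) _ (Quotient.mk (reesSetoid b) x) = _
    rw [Quotient.map_mk]
  have hTindec : Indecomposable S (Quotient (reesSetoid b)) := by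
    rw [indec_iff_conn]
    have key : ∀ x : Quotient (reesSetoid b),
        ActRel S (Quotient.mk (reesSetoid b) 1) x := by
      intro x
      induction x using Quotient.ind with
      | _ z => exact ⟨z, by rw [hact, one_mul]⟩
    intro x y
    exact Relation.EqvGen.trans _ _ _
      (Relation.EqvGen.symm _ _ (Relation.EqvGen.rel _ _ (key x)))
      (Relation.EqvGen.rel _ _ (key y))
  have hC'sub : IsSubact S {z : Quotient (reesSetoid b) |
      ∃ u : S, z = Quotient.mk (reesSetoid b) (a * u)} := by
    constructor
    · exact ⟨Quotient.mk _ (a * 1), ⟨1, rfl⟩⟩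
    · rintro z ⟨u, rfl⟩ s
      exact ⟨u * s, by rw [hact, mul_assoc]⟩
  obtain ⟨q₀⟩ : Nonempty Q := RightAct.nonempty S (A := Q)
  have hresp : ∀ x y : S, (reesSetoid b).r x y →
      (if ∃ u : S, x = a * u then q₀ ⊛ x else q₀)
        = (if ∃ u : S, y = a * u then q₀ ⊛ y else q₀) := by
    rintro x y (rfl | ⟨⟨u, rfl⟩, ⟨v, rfl⟩⟩)
    · rfl
    · rw [if_neg, if_neg]
      · rintro ⟨w, hw⟩; exact hab w v hw.symm
      · rintro ⟨w, hw⟩; exact hab w u hw.symm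
  set f : Quotient (reesSetoid b) → Q :=
    Quotient.lift (fun x : S => if ∃ u : S, x = a * u then q₀ ⊛ x else q₀) hresp
    with hfdef
  have hfmk : ∀ u : S, f (Quotient.mk (reesSetoid b) (a * u)) = q₀ ⊛ (a * u) := by
    intro u
    rw [hfdef, Quotient.lift_mk, if_pos ⟨u, rfl⟩]
  have hfhom : IsActHomOn S f {z : Quotient (reesSetoid b) |
      ∃ u : S, z = Quotient.mk (reesSetoid b) (a * u)} := by
    rintro z ⟨u, rfl⟩ s
    rw [hact, mul_assoc, hfmk, hfmk, ← mul_assoc, ← RightAct.act_mul]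
  obtain ⟨g, hghom, hgeq⟩ := hQinj (Quotient (reesSetoid b)) hTindec _ hC'sub f hfhom
  refine ⟨g (Quotient.mk (reesSetoid b) b), fun s => ?_⟩
  have hb : (Quotient.mk (reesSetoid b) b : Quotient (reesSetoid b)) ⊛ s
      = Quotient.mk (reesSetoid b) b := by
    rw [hact]
    exact Quotient.sound (Or.inr ⟨⟨s, rfl⟩, ⟨1, (mul_one b).symm⟩⟩)
  rw [← hghom _ s, hb]

/-- Case B2: an indecomposable InC-injective act with a zero is injective. -/
lemma caseB2 (Q : Type u) [RightAct S Q] (hQinj : InCInjective S Q)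
    {θ : Q} (hθ : IsZeroElem S θ) : ActInjective S Q := by
  intro B _ C hC f hf
  letI stB : Setoid B := ⟨Relation.EqvGen (ActRel S), Relation.EqvGen.is_equivalence _⟩
  have key : ∀ t : Quotient stB,
      ∃ gK : ↥(ActComponent S (Quotient.out t)) → Q,
        (∀ (x : ↥(ActComponent S (Quotient.out t))) (s : S),
          gK ⟨x.val ⊛ s, comp_closed x.2 s⟩
            = (letI := subactInst (comp_subact (S := S) (Quotient.out t));
               gK x ⊛ s)) ∧
        (∀ x : ↥(ActComponent S (Quotient.out t)), x.val ∈ C → gK x = f x.val) := by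
    intro t
    set K : Set B := ActComponent S (Quotient.out t) with hK
    letI instK := subactInst (comp_subact (S := S) (Quotient.out t))
    by_cases hne : (C ∩ K).Nonempty
    · have hKindec : Indecomposable S ↥K := comp_indec (S := S) (Quotient.out t)
      set CK : Set ↥K := {x | x.val ∈ C} with hCK
      have hCKsub : IsSubact S CK := by
        constructor
        · obtain ⟨c, hcC, hcK⟩ := hne
          exact ⟨⟨c, hcK⟩, hcC⟩
        · intro x hx s
          exact hC.2 x.val hx s
      have hfKhom : IsActHomOn S (fun x : ↥K => f x.val) CK := by
        intro x hx s
        exact hf x.val hx s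
      obtain ⟨gK, hgKhom, hgKeq⟩ := hQinj ↥K hKindec CK hCKsub _ hfKhom
      refine ⟨gK, fun x s => ?_, fun x hx => hgKeq hx⟩
      have : (⟨x.val ⊛ s, comp_closed x.2 s⟩ : ↥K) = x ⊛ s := rfl
      rw [this, hgKhom x s]
    · refine ⟨fun _ => θ, fun x s => (hθ s).symm, fun x hx => ?_⟩
      exact absurd ⟨x.val, hx, x.2⟩ hne
  choose GK h1 h2 using key
  have GK_congr : ∀ (t t' : Quotient stB) (h : t = t')
      (x : ↥(ActComponent S (Quotient.out t)))
      (x' : ↥(ActComponent S (Quotient.out t'))),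
      x.val = x'.val → GK t x = GK t' x' := by
    rintro t _ rfl x x' h
    congr 1
    exact Subtype.ext h
  have memb : ∀ x : B, x ∈ ActComponent S (Quotient.out (Quotient.mk stB x)) :=
    fun x => Quotient.mk_out x
  refine ⟨fun x => GK (Quotient.mk stB x) ⟨x, memb x⟩, fun x s => ?_, fun c hc => ?_⟩
  · have qe : Quotient.mk stB (x ⊛ s) = Quotient.mk stB x :=
      Quotient.sound (Relation.EqvGen.symm _ _ (Relation.EqvGen.rel _ _ ⟨s, rfl⟩))
    have step1 : GK (Quotient.mk stB (x ⊛ s)) ⟨x ⊛ s, memb (x ⊛ s)⟩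
        = GK (Quotient.mk stB x) ⟨x ⊛ s, comp_closed (memb x) s⟩ :=
      GK_congr _ _ qe _ _ rfl
    show GK (Quotient.mk stB (x ⊛ s)) ⟨x ⊛ s, memb _⟩
      = GK (Quotient.mk stB x) ⟨x, memb x⟩ ⊛ s
    rw [step1]
    exact h1 (Quotient.mk stB x) ⟨x, memb x⟩ s
  · exact h2 (Quotient.mk stB c) ⟨c, memb c⟩ hc

end Aux

/-- All indecomposable acts are InC-injective iff all acts are
InC-injective or all indecomposable acts are injective. -/
theorem all_indecomposable_inCInjective_iff (S : Type u) [Monoid S] :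
    (∀ (A : Type u) [RightAct S A], Indecomposable S A → InCInjective S A) ↔
      ((∀ (A : Type u) [RightAct S A], InCInjective S A) ∨
        (∀ (A : Type u) [RightAct S A], Indecomposable S A → ActInjective S A)) := by
  constructor
  · intro H
    by_cases hS : LeftReversible S
    · exact Or.inl (fun A _ => caseA hS H A)
    · refine Or.inr (fun A _ hA => ?_)
      have hAinj : InCInjective S A := H A hA
      have hS' : ∃ a b : S, ∀ u v : S, a * u ≠ b * v := by
        unfold LeftReversible at hS
        push_neg at hS
        exact hS
      obtain ⟨a, b, hab⟩ := hS'
      obtain ⟨θ, hθ⟩ := exists_zero hab A hAinj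
      exact caseB2 A hAinj hθ
  · rintro (h | h)
    · intro A _ _
      exact h A
    · intro A _ hA B _ hB C hC f hf
      exact h A hA B C hC f hf
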